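/- Let f : E → ℝ be differentiable with ℓ_{∇f}-Lipschitz gradient, and define ψ(x) = f(x) + M_h^{1/σ}(A x − z/σ). Then the gradient map x ↦ ∇f(x) + σ·A*(A x − z/σ − p(x)) of ψ, where p(x) is the proximal point of h at A x − z/σ with parameter 1/σ, is Lipschitz continuous with constant ℓ_{∇f} + σ‖A‖², where ‖A‖ is the operator norm of A. -/

import Mathlib

/-!
The convexity of `h` tested at the midpoint of two proximal points `p₁ = prox(u₁)`, `p₂ = prox(u₂)`
gives `‖p₁ - u₁‖² + ‖p₂ - u₂‖² ≤ ‖m - u₁‖² + ‖m - u₂‖²` for `m = (p₁ + p₂) / 2`, and two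
applications of the parallelogram law turn this into the nonexpansiveness of the residual
`u ↦ u - prox(u)`. The gradient of the envelope term is `σ A*` composed with this residual and
with `x ↦ A x - z / σ`, so it is `σ ‖A‖²`-Lipschitz.
-/

open scoped NNReal RealInnerProductSpace

section Prox

variable {F : Type*} [NormedAddCommGroup F] [InnerProductSpace ℝ F]

def IsProxPoint (h : F → ℝ) (σ : ℝ) (u p : F) : Prop :=
  ∀ w : F, h p + (σ / 2) * ‖p - u‖ ^ 2 ≤ h w + (σ / 2) * ‖w - u‖ ^ 2

lemma norm_sub_sub_sub_le_of_sq_le_midpoint {u₁ u₂ p₁ p₂ : F}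
    (hS : ‖p₁ - u₁‖ ^ 2 + ‖p₂ - u₂‖ ^ 2 ≤
      ‖((1 / 2 : ℝ) • p₁ + (1 / 2 : ℝ) • p₂) - u₁‖ ^ 2 +
        ‖((1 / 2 : ℝ) • p₁ + (1 / 2 : ℝ) • p₂) - u₂‖ ^ 2) :
    ‖(u₁ - p₁) - (u₂ - p₂)‖ ≤ ‖u₁ - u₂‖ := by
  set a := p₁ - u₁
  set b := p₂ - u₂
  set d := u₁ - u₂
  have hm₁ : ((1 / 2 : ℝ) • p₁ + (1 / 2 : ℝ) • p₂) - u₁ = (1 / 2 : ℝ) • ((a + b) - d) := by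
    simp only [a, b, d]; module
  have hm₂ : ((1 / 2 : ℝ) • p₁ + (1 / 2 : ℝ) • p₂) - u₂ = (1 / 2 : ℝ) • ((a + b) + d) := by
    simp only [a, b, d]; module
  have hres : (u₁ - p₁) - (u₂ - p₂) = b - a := by simp only [a, b]; abel
  have hab := parallelogram_law_with_norm ℝ a b
  have habd := parallelogram_law_with_norm ℝ (a + b) d
  rw [hm₁, hm₂, norm_smul, norm_smul, Real.norm_of_nonneg (by norm_num)] at hS
  rw [hres, norm_sub_rev, ← sq_le_sq₀ (norm_nonneg _) (norm_nonneg _)]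
  nlinarith

lemma IsProxPoint.sq_le_midpoint {h : F → ℝ} (hconv : ConvexOn ℝ Set.univ h) {σ : ℝ}
    (hσ : 0 < σ) {u₁ u₂ p₁ p₂ : F} (h₁ : IsProxPoint h σ u₁ p₁) (h₂ : IsProxPoint h σ u₂ p₂) :
    ‖p₁ - u₁‖ ^ 2 + ‖p₂ - u₂‖ ^ 2 ≤
      ‖((1 / 2 : ℝ) • p₁ + (1 / 2 : ℝ) • p₂) - u₁‖ ^ 2 +
        ‖((1 / 2 : ℝ) • p₁ + (1 / 2 : ℝ) • p₂) - u₂‖ ^ 2 := by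
  set m := (1 / 2 : ℝ) • p₁ + (1 / 2 : ℝ) • p₂
  have hmid : h m ≤ (1 / 2 : ℝ) • h p₁ + (1 / 2 : ℝ) • h p₂ :=
    hconv.2 (Set.mem_univ _) (Set.mem_univ _) (by norm_num) (by norm_num) (by norm_num)
  have hm₁ := h₁ m
  have hm₂ := h₂ m
  simp only [smul_eq_mul] at hmid
  refine le_of_mul_le_mul_left ?_ (half_pos hσ)
  linarith

lemma IsProxPoint.norm_sub_sub_sub_le {h : F → ℝ} (hconv : ConvexOn ℝ Set.univ h) {σ : ℝ}
    (hσ : 0 < σ) {u₁ u₂ p₁ p₂ : F} (h₁ : IsProxPoint h σ u₁ p₁) (h₂ : IsProxPoint h σ u₂ p₂) :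
    ‖(u₁ - p₁) - (u₂ - p₂)‖ ≤ ‖u₁ - u₂‖ :=
  norm_sub_sub_sub_le_of_sq_le_midpoint (h₁.sq_le_midpoint hconv hσ h₂)

end Prox

theorem augmented_lagrangian_gradient_lipschitz_general
    {E F : Type*} [NormedAddCommGroup E] [InnerProductSpace ℝ E] [FiniteDimensional ℝ E]
    [NormedAddCommGroup F] [InnerProductSpace ℝ F] [FiniteDimensional ℝ F]
    (A : E →L[ℝ] F) (h : F → ℝ)
    (hconv : ConvexOn ℝ Set.univ h)
    (σ : ℝ) (hσ : 0 < σ) (z : F)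
    (p : E → F)
    (hp : ∀ x : E, ∀ w : F,
      h (p x) + (σ / 2) * ‖p x - (A x - σ⁻¹ • z)‖ ^ 2
        ≤ h w + (σ / 2) * ‖w - (A x - σ⁻¹ • z)‖ ^ 2)
    (f' : E → E)
    (ℓf : ℝ) (hflip : ∀ x₁ x₂ : E, ‖f' x₁ - f' x₂‖ ≤ ℓf * ‖x₁ - x₂‖) :
    ∀ x₁ x₂ : E,
      ‖(f' x₁ + σ • (ContinuousLinearMap.adjoint A) (A x₁ - σ⁻¹ • z - p x₁)) -
          (f' x₂ + σ • (ContinuousLinearMap.adjoint A) (A x₂ - σ⁻¹ • z - p x₂))‖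
        ≤ (ℓf + σ * ‖A‖ ^ 2) * ‖x₁ - x₂‖ := by
  intro x₁ x₂
  set u : E → F := fun x => A x - σ⁻¹ • z
  have hres : ‖(u x₁ - p x₁) - (u x₂ - p x₂)‖ ≤ ‖A‖ * ‖x₁ - x₂‖ :=
    calc ‖(u x₁ - p x₁) - (u x₂ - p x₂)‖ ≤ ‖u x₁ - u x₂‖ :=
          IsProxPoint.norm_sub_sub_sub_le hconv hσ (hp x₁) (hp x₂)
      _ = ‖A (x₁ - x₂)‖ := by simp only [u, map_sub, sub_sub_sub_cancel_right]
      _ ≤ ‖A‖ * ‖x₁ - x₂‖ := A.le_opNorm _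
  have hsplit : (f' x₁ + σ • (ContinuousLinearMap.adjoint A) (u x₁ - p x₁)) -
        (f' x₂ + σ • (ContinuousLinearMap.adjoint A) (u x₂ - p x₂)) =
      (f' x₁ - f' x₂) + σ • (ContinuousLinearMap.adjoint A) ((u x₁ - p x₁) - (u x₂ - p x₂)) := by
    simp only [map_sub, smul_sub]; abel
  rw [hsplit]
  calc _ ≤ ‖f' x₁ - f' x₂‖ + σ * (‖A‖ * ‖(u x₁ - p x₁) - (u x₂ - p x₂)‖) := by
        grw [norm_add_le, norm_smul, Real.norm_of_nonneg hσ.le, ContinuousLinearMap.le_opNorm,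
          LinearIsometryEquiv.norm_map]
    _ ≤ ℓf * ‖x₁ - x₂‖ + σ * (‖A‖ * (‖A‖ * ‖x₁ - x₂‖)) := by grw [hflip, hres]
    _ = (ℓf + σ * ‖A‖ ^ 2) * ‖x₁ - x₂‖ := by ring

/-- The gradient map of the augmented Lagrangian `ψ(x) = f(x) + M_h^{1/σ}(Ax - z/σ)`,
namely `x ↦ ∇f(x) + σ A*(Ax - z/σ - p(x))`, is Lipschitz with constant `ℓ_{∇f} + σ‖A‖²`. -/
theorem augmented_lagrangian_gradient_lipschitz
    {E F : Type*} [NormedAddCommGroup E] [InnerProductSpace ℝ E] [FiniteDimensional ℝ E]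
    [NormedAddCommGroup F] [InnerProductSpace ℝ F] [FiniteDimensional ℝ F]
    (A : E →L[ℝ] F) (h : F → ℝ) (ℓh : ℝ≥0)
    (hconv : ConvexOn ℝ Set.univ h) (hlip : LipschitzWith ℓh h)
    (σ : ℝ) (hσ : 0 < σ) (z : F)
    (p : E → F)
    (hp : ∀ x : E, ∀ w : F,
      h (p x) + (σ / 2) * ‖p x - (A x - σ⁻¹ • z)‖ ^ 2
        ≤ h w + (σ / 2) * ‖w - (A x - σ⁻¹ • z)‖ ^ 2)
    (f : E → ℝ) (f' : E → E) (hf : ∀ x : E, HasGradientAt f (f' x) x)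
    (ℓf : ℝ) (hflip : ∀ x₁ x₂ : E, ‖f' x₁ - f' x₂‖ ≤ ℓf * ‖x₁ - x₂‖) :
    ∀ x₁ x₂ : E,
      ‖(f' x₁ + σ • (ContinuousLinearMap.adjoint A) (A x₁ - σ⁻¹ • z - p x₁)) -
          (f' x₂ + σ • (ContinuousLinearMap.adjoint A) (A x₂ - σ⁻¹ • z - p x₂))‖
        ≤ (ℓf + σ * ‖A‖ ^ 2) * ‖x₁ - x₂‖ :=
  augmented_lagrangian_gradient_lipschitz_general A h hconv σ hσ z p hp f' ℓf hflip
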